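/- Suppose Θ is bounded, the learning steplength is constant with 0 < γ_g < 2/G_g, and the extragradient steplength satisfies τ² < 1/(L_{F,x}² + 2 L_{F,θ} ‖θ₀ − θ*‖). Then the sequence (x_k, θ_k) generated by the joint extragradient scheme satisfies: x_k converges to a solution of VI(X, F(·,θ*)) and θ_k → θ* as k → ∞. -/

import Mathlib

/-!
The learning sequence `θ_k` is projected gradient descent on a smooth strongly convex `g`:
sufficient decrease `g θ_{k+1} ≤ g θ_k - (1/γ - G/2) ‖θ_{k+1} - θ_k‖²` together with the error
bound `g θ_{k+1} - g θ* ≲ ‖θ_{k+1} - θ_k‖²` makes the optimality gap contract geometrically, so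
`‖θ_k - θ*‖` is summable. The `x`-iteration is then an extragradient method for the monotone
operator `F(·, θ*)` run with the perturbed operators `F(·, θ_k)`; the perturbation enters the
usual extragradient inequality only through `L_{F,θ} ‖θ_k - θ*‖`. Since `τ L_{F,x} < 1`, the
distance to every solution satisfies a quasi-Fejér recursion with summable errors, hence
converges, while `x_k - z_{k+1} → 0`. A cluster point of the bounded sequence `x_k` solves the
variational inequality, and the distance to it converges to `0` along a subsequence, hence along
the whole sequence.
-/

open Filter Topology RealInnerProductSpace

theorem mul_le_div_two_mul_sq_add_sq_div (a b : ℝ) {ε : ℝ} (hε : 0 < ε) :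
    a * b ≤ ε / 2 * a ^ 2 + b ^ 2 / (2 * ε) := by
  have h : 0 ≤ (ε * a - b) ^ 2 / (2 * ε) := by positivity
  have : (ε * a - b) ^ 2 / (2 * ε) = ε / 2 * a ^ 2 + b ^ 2 / (2 * ε) - a * b := by
    field_simp
    ring
  linarith

section NearestPoint

variable {E : Type*} [NormedAddCommGroup E] [InnerProductSpace ℝ E]

def IsNearestPoint (S : Set E) (y p : E) : Prop :=
  p ∈ S ∧ ∀ w ∈ S, ‖y - p‖ ≤ ‖y - w‖

variable {S : Set E} {y p w : E}

theorem IsNearestPoint.real_inner_le_zero (hS : Convex ℝ S) (hp : IsNearestPoint S y p)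
    (hw : w ∈ S) : ⟪y - p, w - p⟫ ≤ 0 := by
  have : Nonempty S := ⟨⟨p, hp.1⟩⟩
  refine (norm_eq_iInf_iff_real_inner_le_zero hS hp.1).1 ?_ w hw
  exact le_antisymm (le_ciInf fun v => hp.2 v v.2)
    (ciInf_le ⟨0, Set.forall_mem_range.2 fun _ => norm_nonneg _⟩ (⟨p, hp.1⟩ : S))

theorem IsNearestPoint.real_inner_le_smul_inner {τ : ℝ} {v : E} (hS : Convex ℝ S)
    (hp : IsNearestPoint S (y - τ • v) p) (hw : w ∈ S) : ⟪y - p, w - p⟫ ≤ τ * ⟪v, w - p⟫ := by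
  have h := hp.real_inner_le_zero hS hw
  rw [show y - τ • v - p = (y - p) - τ • v by abel, inner_sub_left, real_inner_smul_left] at h
  linarith

theorem IsNearestPoint.norm_sub_sq_le (hS : Convex ℝ S) (hp : IsNearestPoint S y p)
    (hw : w ∈ S) : ‖p - w‖ ^ 2 ≤ ‖y - w‖ ^ 2 - ‖y - p‖ ^ 2 := by
  have h := hp.real_inner_le_zero hS hw
  rw [show y - w = (y - p) - (w - p) by abel, norm_sub_sq_real (y - p), norm_sub_rev p w]
  linarith

end NearestPoint

section Gradient

variable {E : Type*} [NormedAddCommGroup E] [InnerProductSpace ℝ E] [CompleteSpace E]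
  {f : E → ℝ} {f' : E → E}

theorem HasGradientAt.hasDerivAt_comp_add_smul {g a d : E} {t : ℝ}
    (hf : HasGradientAt f g (a + t • d)) :
    HasDerivAt (fun s : ℝ => f (a + s • d)) ⟪g, d⟫ t := by
  have hline : HasDerivAt (fun s : ℝ => a + s • d) d t := by
    simpa using ((hasDerivAt_id t).smul_const d).const_add a
  simpa [Function.comp_def] using hf.hasFDerivAt.comp_hasDerivAt t hline

theorem le_add_inner_add_sq_of_lipschitz_gradient {G : ℝ}
    (hf : ∀ x, HasGradientAt f (f' x) x) (hG : ∀ x y, ‖f' x - f' y‖ ≤ G * ‖x - y‖) (a b : E) :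
    f b ≤ f a + ⟪f' a, b - a⟫ + G / 2 * ‖b - a‖ ^ 2 := by
  set d := b - a
  let ψ : ℝ → ℝ := fun t => f (a + t • d) - t * ⟪f' a, d⟫ - G / 2 * ‖d‖ ^ 2 * t ^ 2
  have hψ : ∀ t, HasDerivAt ψ (⟪f' (a + t • d) - f' a, d⟫ - G * ‖d‖ ^ 2 * t) t := by
    intro t
    have := (((hf (a + t • d)).hasDerivAt_comp_add_smul).sub
      ((hasDerivAt_id t).mul_const ⟪f' a, d⟫)).sub
        ((hasDerivAt_pow 2 t).const_mul (G / 2 * ‖d‖ ^ 2))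
    refine this.congr_deriv ?_
    rw [inner_sub_left]
    ring
  have hanti : AntitoneOn ψ (Set.Icc 0 1) := by
    refine antitoneOn_of_deriv_nonpos (convex_Icc 0 1)
      (HasDerivAt.continuousOn fun t _ => hψ t)
      (fun t _ => (hψ t).differentiableAt.differentiableWithinAt) fun t ht => ?_
    rw [interior_Icc] at ht
    rw [(hψ t).deriv, sub_nonpos]
    calc ⟪f' (a + t • d) - f' a, d⟫ ≤ ‖f' (a + t • d) - f' a‖ * ‖d‖ := real_inner_le_norm _ _
      _ ≤ G * ‖t • d‖ * ‖d‖ := by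
          gcongr
          simpa using hG (a + t • d) a
      _ = G * ‖d‖ ^ 2 * t := by
          rw [norm_smul, Real.norm_of_nonneg ht.1.le]
          ring
  have h := hanti ⟨le_rfl, zero_le_one⟩ ⟨zero_le_one, le_rfl⟩ zero_le_one
  simp only [ψ, zero_smul, one_smul, add_zero, zero_mul, sub_zero, one_pow, mul_one, d,
    add_sub_cancel] at h
  linarith

theorem StrongConvexOn.add_inner_add_sq_le {s : Set E} {m : ℝ} {g a b : E}
    (hf : StrongConvexOn s m f) (ha : a ∈ s) (hb : b ∈ s) (hfa : HasGradientAt f g a) :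
    f a + ⟪g, b - a⟫ + m / 2 * ‖b - a‖ ^ 2 ≤ f b := by
  set d := b - a
  have hslope : ∀ t ∈ Set.Ioc (0 : ℝ) 1,
      slope (fun s : ℝ => f (a + s • d)) 0 t ≤ f b - f a - (1 - t) * (m / 2 * ‖d‖ ^ 2) := by
    rintro t ⟨ht0, ht1⟩
    have h := hf.2 hb ha ht0.le (sub_nonneg.2 ht1) (add_sub_cancel t 1)
    rw [show t • b + (1 - t) • a = a + t • d by
      simp only [d, smul_sub, sub_smul, one_smul]; abel] at h
    rw [slope_def_field]
    simp only [smul_eq_mul, zero_smul, add_zero, sub_zero] at h ⊢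
    rw [div_le_iff₀ ht0]
    linarith
  have hderiv : HasDerivAt (fun s : ℝ => f (a + s • d)) ⟪g, d⟫ 0 :=
    HasGradientAt.hasDerivAt_comp_add_smul (by simpa using hfa)
  have hlim : Tendsto (fun t : ℝ => f b - f a - (1 - t) * (m / 2 * ‖d‖ ^ 2)) (𝓝[>] 0)
      (𝓝 (f b - f a - m / 2 * ‖d‖ ^ 2)) := by
    refine tendsto_nhdsWithin_of_tendsto_nhds ?_
    have : Continuous fun t : ℝ => f b - f a - (1 - t) * (m / 2 * ‖d‖ ^ 2) := by fun_prop
    simpa using this.tendsto 0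
  have := le_of_tendsto_of_tendsto
    ((hasDerivAt_iff_tendsto_slope.1 hderiv).mono_left (nhdsGT_le_nhdsNE 0)) hlim
    (mem_of_superset (Ioc_mem_nhdsGT zero_lt_one) hslope)
  linarith

end Gradient

section ProjectedGradient

variable {E : Type*} [NormedAddCommGroup E] [InnerProductSpace ℝ E] [CompleteSpace E]
  {S : Set E} {g : E → ℝ} {g' : E → E} {G γ η : ℝ}

theorem projGrad_descent {y p : E} (hS : Convex ℝ S) (hg : ∀ x, HasGradientAt g (g' x) x)
    (hG : ∀ x y, ‖g' x - g' y‖ ≤ G * ‖x - y‖) (hγ : 0 < γ) (hy : y ∈ S)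
    (hp : IsNearestPoint S (y - γ • g' y) p) :
    g p ≤ g y - (1 / γ - G / 2) * ‖p - y‖ ^ 2 := by
  have hproj := hp.real_inner_le_smul_inner hS hy
  rw [real_inner_self_eq_norm_sq, norm_sub_rev] at hproj
  have hdesc := le_add_inner_add_sq_of_lipschitz_gradient hg hG y p
  rw [← neg_sub y p, inner_neg_right, norm_neg, norm_sub_rev y p] at hdesc
  have : 1 / γ * ‖p - y‖ ^ 2 ≤ ⟪g' y, y - p⟫ := by
    rw [one_div_mul_eq_div, div_le_iff₀ hγ]
    linarith
  linarith

theorem projGrad_gap {y p θ : E} (hS : Convex ℝ S) (hg : ∀ x, HasGradientAt g (g' x) x)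
    (hG : ∀ x y, ‖g' x - g' y‖ ≤ G * ‖x - y‖) (hγ : 0 < γ) (hη : StrongConvexOn S η g)
    (hp : IsNearestPoint S (y - γ • g' y) p) (hθ : θ ∈ S) :
    g p - g θ + η / 2 * ‖p - θ‖ ^ 2 ≤ (1 / γ + G) * ‖p - y‖ * ‖p - θ‖ := by
  have hstrong := hη.add_inner_add_sq_le hp.1 hθ (hg p)
  have hproj := hp.real_inner_le_smul_inner hS hθ
  have hcs : ⟪p - y, θ - p⟫ ≤ ‖p - y‖ * ‖p - θ‖ := by
    simpa only [norm_sub_rev θ p] using real_inner_le_norm (p - y) (θ - p)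
  have hlip : ⟪g' y - g' p, θ - p⟫ ≤ G * ‖p - y‖ * ‖p - θ‖ := by
    calc ⟪g' y - g' p, θ - p⟫ ≤ ‖g' y - g' p‖ * ‖θ - p‖ := real_inner_le_norm _ _
      _ ≤ G * ‖y - p‖ * ‖θ - p‖ := by gcongr; exact hG y p
      _ = G * ‖p - y‖ * ‖p - θ‖ := by rw [norm_sub_rev y p, norm_sub_rev θ p]
  have hstep : -⟪g' y, θ - p⟫ ≤ 1 / γ * (‖p - y‖ * ‖p - θ‖) := by
    rw [one_div_mul_eq_div, le_div_iff₀ hγ]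
    rw [← neg_sub p y, inner_neg_left] at hproj
    linarith
  rw [norm_sub_rev θ p, inner_sub_left] at *
  linarith

theorem projGrad_error_bound {y p θs : E} (hS : Convex ℝ S) (hg : ∀ x, HasGradientAt g (g' x) x)
    (hG : ∀ x y, ‖g' x - g' y‖ ≤ G * ‖x - y‖) (hG0 : 0 ≤ G) (hγ : 0 < γ) (hη0 : 0 < η)
    (hη : StrongConvexOn S η g) (hp : IsNearestPoint S (y - γ • g' y) p) (hθs : θs ∈ S)
    (hmin : ∀ ϑ ∈ S, g θs ≤ g ϑ) :
    ‖p - θs‖ ≤ 2 * (1 / γ + G) / η * ‖p - y‖ ∧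
      g p - g θs ≤ (1 / γ + G) ^ 2 / (2 * η) * ‖p - y‖ ^ 2 := by
  have hgap := projGrad_gap hS hg hG hγ hη hp hθs
  have hgp := sub_nonneg.2 (hmin p hp.1)
  set K := 1 / γ + G
  set D := ‖p - θs‖
  set Δ := ‖p - y‖
  have hK : 0 ≤ K := by positivity
  constructor
  · rcases (show 0 ≤ D from norm_nonneg _).eq_or_lt with hD | hD
    · rw [← hD]
      positivity
    · rw [div_mul_eq_mul_div, le_div_iff₀ hη0]
      nlinarith
  · have hamgm := mul_le_div_two_mul_sq_add_sq_div D (K * Δ) hη0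
    rw [mul_pow, mul_div_right_comm] at hamgm
    linarith

theorem le_geometric_of_sufficient_decrease {h Δ : ℕ → ℝ} {c K : ℝ} (hc : 0 < c) (hK : 0 ≤ K)
    (hdesc : ∀ k, h (k + 1) ≤ h k - c * Δ k ^ 2) (herr : ∀ k, h (k + 1) ≤ K * Δ k ^ 2) (k : ℕ) :
    h k ≤ h 0 * (K / (c + K)) ^ k := by
  induction k with
  | zero => simp
  | succ k ih =>
    have hcontr : h (k + 1) ≤ K / (c + K) * h k := by
      rw [div_mul_eq_mul_div, le_div_iff₀ (by positivity)]
      linarith [mul_le_mul_of_nonneg_left (herr k) hc.le, mul_le_mul_of_nonneg_left (hdesc k) hK]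
    calc h (k + 1) ≤ K / (c + K) * h k := hcontr
      _ ≤ K / (c + K) * (h 0 * (K / (c + K)) ^ k) := by gcongr
      _ = h 0 * (K / (c + K)) ^ (k + 1) := by ring

theorem projGrad_linear_rate (hS : Convex ℝ S) (hg : ∀ x, HasGradientAt g (g' x) x)
    (hG : ∀ x y, ‖g' x - g' y‖ ≤ G * ‖x - y‖) (hG0 : 0 < G) (hη0 : 0 < η)
    (hη : StrongConvexOn S η g) {θs : E} (hθs : θs ∈ S) (hmin : ∀ ϑ ∈ S, g θs ≤ g ϑ)
    (hγ : 0 < γ) (hγG : γ < 2 / G) {θ : ℕ → E} (hθ0 : θ 0 ∈ S)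
    (hθ : ∀ k, IsNearestPoint S (θ k - γ • g' (θ k)) (θ (k + 1))) :
    ∃ C q : ℝ, 0 ≤ q ∧ q < 1 ∧ ∀ k, ‖θ (k + 1) - θs‖ ≤ C * q ^ k := by
  have hθS : ∀ k, θ k ∈ S := fun k => k.casesOn hθ0 fun k => (hθ k).1
  set c := 1 / γ - G / 2
  set K := (1 / γ + G) ^ 2 / (2 * η)
  set ρ := K / (c + K)
  set h := fun k => g (θ k) - g θs
  set Δ := fun k => ‖θ (k + 1) - θ k‖
  have hc : 0 < c := by
    have : γ * G < 2 := (lt_div_iff₀ hG0).1 hγG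
    simp only [c, sub_pos, div_lt_div_iff₀ two_pos hγ]
    linarith
  have hh : ∀ k, 0 ≤ h k := fun k => sub_nonneg.2 (hmin _ (hθS k))
  have hdesc : ∀ k, h (k + 1) ≤ h k - c * Δ k ^ 2 := fun k => by
    have := projGrad_descent hS hg hG hγ (hθS k) (hθ k)
    simp only [h, Δ, c]
    linarith
  have herr := fun k => projGrad_error_bound hS hg hG hG0.le hγ hη0 hη (hθ k) hθs hmin
  have hgeo := le_geometric_of_sufficient_decrease hc (by positivity) hdesc fun k => (herr k).2
  have hρ0 : 0 ≤ ρ := by positivity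
  have hρ1 : ρ < 1 := by rw [div_lt_one (by positivity)]; linarith
  have hΔ : ∀ k, Δ k ≤ √(h 0 / c) * √ρ ^ k := fun k => by
    rw [← pow_le_pow_iff_left₀ (norm_nonneg _) (by positivity) two_ne_zero, mul_pow, ← pow_mul,
      mul_comm k, pow_mul, Real.sq_sqrt hρ0, Real.sq_sqrt (div_nonneg (hh 0) hc.le),
      div_mul_eq_mul_div, le_div_iff₀ hc]
    linarith [hdesc k, hh (k + 1), hgeo k]
  refine ⟨2 * (1 / γ + G) / η * √(h 0 / c), √ρ, Real.sqrt_nonneg _,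
    (Real.sqrt_lt' one_pos).2 (by simpa using hρ1), fun k => ?_⟩
  calc ‖θ (k + 1) - θs‖ ≤ 2 * (1 / γ + G) / η * Δ k := (herr k).1
    _ ≤ 2 * (1 / γ + G) / η * (√(h 0 / c) * √ρ ^ k) := by gcongr; exact hΔ k
    _ = 2 * (1 / γ + G) / η * √(h 0 / c) * √ρ ^ k := by ring

end ProjectedGradient

section QuasiFejer

variable {a r f : ℕ → ℝ}

theorem tendsto_of_le_sub_add_summable (ha : ∀ k, 0 ≤ a k) (hr : ∀ k, 0 ≤ r k)
    (hf : ∀ k, 0 ≤ f k) (hfs : Summable f) (hrec : ∀ k, a (k + 1) ≤ a k - r k + f k) :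
    (∃ l, Tendsto a atTop (𝓝 l)) ∧ Tendsto r atTop (𝓝 0) := by
  set R := fun k => ∑ j ∈ Finset.range k, r j
  set F := fun k => ∑ j ∈ Finset.range k, f j
  have hF : ∀ k, F k ≤ ∑' j, f j := fun k => hfs.sum_le_tsum _ fun j _ => hf j
  have hanti : Antitone fun k => a k + R k - F k := antitone_nat_of_succ_le fun k => by
    simp only [R, F, Finset.sum_range_succ]
    linarith [hrec k]
  have hbdd : BddBelow (Set.range fun k => a k + R k - F k) := by
    refine ⟨-∑' j, f j, Set.forall_mem_range.2 fun k => ?_⟩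
    linarith [ha k, hF k, Finset.sum_nonneg fun j (_ : j ∈ Finset.range k) => hr j]
  have hu := tendsto_atTop_ciInf hanti hbdd
  have hrs : Summable r := by
    refine summable_of_sum_range_le (c := a 0 + ∑' j, f j) hr fun k => ?_
    have := hanti (Nat.zero_le k)
    simp only [R, F, Finset.range_zero, Finset.sum_empty] at this
    linarith [ha k, hF k]
  refine ⟨⟨(⨅ k, a k + R k - F k) - ∑' j, r j + ∑' j, f j, ?_⟩, hrs.tendsto_atTop_zero⟩
  exact ((hu.sub hrs.hasSum.tendsto_sum_nat).add hfs.hasSum.tendsto_sum_nat).congr fun k => by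
    simp only [R, F]
    ring

theorem le_mul_exp_tsum_of_le_one_add_mul (ha : ∀ k, 0 ≤ a k) (hf : ∀ k, 0 ≤ f k)
    (hfs : Summable f) (hrec : ∀ k, a (k + 1) ≤ (1 + f k) * a k) (k : ℕ) :
    a k ≤ a 0 * Real.exp (∑' j, f j) := by
  have hpartial : a k ≤ a 0 * Real.exp (∑ j ∈ Finset.range k, f j) := by
    induction k with
    | zero => simp
    | succ k ih =>
      calc a (k + 1) ≤ (1 + f k) * a k := hrec k
        _ ≤ Real.exp (f k) * (a 0 * Real.exp (∑ j ∈ Finset.range k, f j)) := by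
          gcongr
          all_goals linarith [hf k, ha k, Real.add_one_le_exp (f k)]
        _ = a 0 * Real.exp (∑ j ∈ Finset.range (k + 1), f j) := by
          rw [Finset.sum_range_succ, Real.exp_add]
          ring
  refine hpartial.trans ?_
  gcongr
  · linarith [ha 0]
  · exact hfs.sum_le_tsum _ fun j _ => hf j

theorem quasiFejer_tendsto (ha : ∀ k, 0 ≤ a k) (hr : ∀ k, 0 ≤ r k) (hf : ∀ k, 0 ≤ f k)
    (hfs : Summable f) (hrec : ∀ k, a (k + 1) ≤ (1 + f k) * a k - r k + f k) :
    (∃ l, Tendsto a atTop (𝓝 l)) ∧ Tendsto r atTop (𝓝 0) := by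
  set M := (a 0 + 1) * Real.exp (∑' j, f j)
  have hM : ∀ k, a k + 1 ≤ M := le_mul_exp_tsum_of_le_one_add_mul (a := fun k => a k + 1)
    (fun k => by linarith [ha k]) hf hfs (fun k => by nlinarith [hrec k, hr k])
  refine tendsto_of_le_sub_add_summable ha hr (f := fun k => M * f k)
    (fun k => mul_nonneg (by linarith [ha 0, hM 0]) (hf k)) (hfs.mul_left M) fun k => ?_
  linarith [hrec k, mul_le_mul_of_nonneg_right (hM k) (hf k)]

end QuasiFejer

theorem exists_tendsto_of_tendsto_dist {X : Type*} [MetricSpace X] [ProperSpace X]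
    {S : Set X} {x : ℕ → X} (hS : S.Nonempty)
    (hdist : ∀ s ∈ S, ∃ l, Tendsto (fun k => dist (x k) s) atTop (𝓝 l))
    (hclust : ∀ y (φ : ℕ → ℕ), Tendsto φ atTop atTop → Tendsto (x ∘ φ) atTop (𝓝 y) → y ∈ S) :
    ∃ y ∈ S, Tendsto x atTop (𝓝 y) := by
  obtain ⟨s, hs⟩ := hS
  obtain ⟨l, hl⟩ := hdist s hs
  obtain ⟨M, hM⟩ := hl.bddAbove_range
  obtain ⟨y, -, φ, hφ, hxφ⟩ := tendsto_subseq_of_bounded (Metric.isBounded_closedBall (x := s))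
    fun k => Metric.mem_closedBall.2 (hM ⟨k, rfl⟩)
  have hy := hclust y φ hφ.tendsto_atTop hxφ
  obtain ⟨l', hl'⟩ := hdist y hy
  have hl'0 : l' = 0 := tendsto_nhds_unique (hl'.comp hφ.tendsto_atTop)
    (tendsto_iff_dist_tendsto_zero.1 hxφ)
  exact ⟨y, hy, tendsto_iff_dist_tendsto_zero.2 (hl'0 ▸ hl')⟩

section Extragradient

variable {E : Type*} [NormedAddCommGroup E] [InnerProductSpace ℝ E]

def IsVISolution (X : Set E) (A : E → E) (y : E) : Prop :=
  y ∈ X ∧ ∀ w ∈ X, 0 ≤ ⟪A y, w - y⟫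

variable {X : Set E} {A : E → E} {B : ℕ → E → E} {τ L : ℝ} {δ : ℕ → ℝ} {x z : ℕ → E}

theorem extragradient_step_norm_sq_le {T : E → E} {ε : ℝ} {u zn xn xs : E} (hX : Convex ℝ X)
    (hτ : 0 ≤ τ) (hz : IsNearestPoint X (u - τ • T u) zn) (hx : IsNearestPoint X (u - τ • T zn) xn)
    (hxs : IsVISolution X A xs) (hmono : 0 ≤ ⟪A zn - A xs, zn - xs⟫)
    (hBA : ‖T zn - A zn‖ ≤ ε) (hB : ‖T zn - T u‖ ≤ L * ‖zn - u‖) :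
    ‖xn - xs‖ ^ 2 ≤
      ‖u - xs‖ ^ 2 - (1 - τ ^ 2 * L ^ 2) * ‖u - zn‖ ^ 2 + 2 * τ * ε * ‖zn - xs‖ := by
  have hproj := hx.norm_sub_sq_le hX hxs.1
  have hexpand : ‖u - τ • T zn - xs‖ ^ 2 - ‖u - τ • T zn - xn‖ ^ 2 =
      ‖u - xs‖ ^ 2 - ‖u - xn‖ ^ 2 + 2 * τ * ⟪T zn, xs - xn⟫ := by
    rw [sub_right_comm u, sub_right_comm u (τ • T zn) xn, norm_sub_sq_real (u - xs),
      norm_sub_sq_real (u - xn), real_inner_smul_right, real_inner_smul_right,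
      show xs - xn = (u - xn) - (u - xs) by abel, inner_sub_right, real_inner_comm (u - xs),
      real_inner_comm (u - xn)]
    ring
  have hsplit : ⟪T zn, xs - xn⟫ = ⟪T zn, xs - zn⟫ + ⟪T zn, zn - xn⟫ := by
    rw [← inner_add_right, sub_add_sub_cancel]
  -- monotonicity and the VI at `xs` leave only the misspecification error
  have hmisspec : ⟪T zn, xs - zn⟫ ≤ ε * ‖zn - xs‖ := by
    have hAxs := hxs.2 zn hz.1
    have hcs : ⟪T zn - A zn, xs - zn⟫ ≤ ε * ‖zn - xs‖ :=
      (real_inner_le_norm _ _).trans (by rw [norm_sub_rev xs zn]; gcongr)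
    rw [← neg_sub zn xs, inner_neg_right] at hcs ⊢
    rw [inner_sub_left] at hmono hcs
    linarith
  -- the extrapolation step `zn` controls the remaining inner product
  have hextra : τ * ⟪T zn, zn - xn⟫ ≤ ⟪u - zn, zn - xn⟫ + τ * (L * ‖u - zn‖ * ‖zn - xn‖) := by
    have hzproj := hz.real_inner_le_smul_inner hX hx.1
    have hcs : ⟪T zn - T u, zn - xn⟫ ≤ L * ‖u - zn‖ * ‖zn - xn‖ :=
      (real_inner_le_norm _ _).trans (by rw [norm_sub_rev u zn]; gcongr)
    rw [← neg_sub zn xn, inner_neg_right, inner_neg_right] at hzproj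
    rw [inner_sub_left] at hcs
    nlinarith
  have hthree : ‖u - xn‖ ^ 2 = ‖u - zn‖ ^ 2 + 2 * ⟪u - zn, zn - xn⟫ + ‖zn - xn‖ ^ 2 := by
    rw [← norm_add_sq_real, sub_add_sub_cancel]
  have hyoung : 2 * (τ * (L * ‖u - zn‖ * ‖zn - xn‖)) ≤
      τ ^ 2 * L ^ 2 * ‖u - zn‖ ^ 2 + ‖zn - xn‖ ^ 2 := by
    nlinarith [sq_nonneg (τ * L * ‖u - zn‖ - ‖zn - xn‖)]
  nlinarith [mul_le_mul_of_nonneg_left hmisspec hτ]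

theorem extragradient_quasiFejer (hX : Convex ℝ X) (hτ : 0 ≤ τ) (hc : 0 < 1 - τ ^ 2 * L ^ 2)
    (hmono : ∀ u ∈ X, ∀ v ∈ X, 0 ≤ ⟪A u - A v, u - v⟫)
    (hLip : ∀ k, ∀ u ∈ X, ∀ v ∈ X, ‖B k u - B k v‖ ≤ L * ‖u - v‖)
    (hBA : ∀ k, ∀ u ∈ X, ‖B k u - A u‖ ≤ δ k) (hxX : ∀ k, x k ∈ X)
    (hz : ∀ k, IsNearestPoint X (x k - τ • B k (x k)) (z (k + 1)))
    (hx : ∀ k, IsNearestPoint X (x k - τ • B k (z (k + 1))) (x (k + 1)))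
    {xs : E} (hxs : IsVISolution X A xs) (k : ℕ) :
    ‖x (k + 1) - xs‖ ^ 2 ≤
      (1 + (τ * δ k + 2 * τ ^ 2 * δ k ^ 2 / (1 - τ ^ 2 * L ^ 2))) * ‖x k - xs‖ ^ 2
        - (1 - τ ^ 2 * L ^ 2) / 2 * ‖x k - z (k + 1)‖ ^ 2
        + (τ * δ k + 2 * τ ^ 2 * δ k ^ 2 / (1 - τ ^ 2 * L ^ 2)) := by
  have hzX := (hz k).1
  have hstep := extragradient_step_norm_sq_le hX hτ (hz k) (hx k) hxs (hmono _ hzX _ hxs.1)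
    (hBA k _ hzX) (hLip k _ hzX _ (hxX k))
  set c := 1 - τ ^ 2 * L ^ 2
  have hτδ : 0 ≤ τ * δ k := mul_nonneg hτ ((norm_nonneg _).trans (hBA k _ hzX))
  set d := ‖x k - xs‖
  set w := ‖x k - z (k + 1)‖
  have htri : ‖z (k + 1) - xs‖ ≤ d + w := by
    calc ‖z (k + 1) - xs‖ ≤ ‖z (k + 1) - x k‖ + ‖x k - xs‖ :=
          norm_sub_le_norm_sub_add_norm_sub _ _ _
      _ = d + w := by rw [norm_sub_rev]; ring
  have hd : 2 * (τ * δ k) * d ≤ τ * δ k * (d ^ 2 + 1) := by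
    nlinarith [mul_nonneg hτδ (sq_nonneg (d - 1))]
  have hw : 2 * (τ * δ k) * w ≤ c / 2 * w ^ 2 + 2 * τ ^ 2 * δ k ^ 2 / c := by
    have := mul_le_div_two_mul_sq_add_sq_div w (2 * (τ * δ k)) hc
    rw [show (2 * (τ * δ k)) ^ 2 / (2 * c) = 2 * τ ^ 2 * δ k ^ 2 / c by field_simp] at this
    linarith
  have hE : 0 ≤ 2 * τ ^ 2 * δ k ^ 2 / c := by positivity
  linarith [mul_le_mul_of_nonneg_left htri hτδ, mul_nonneg hE (sq_nonneg d)]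

theorem isVISolution_of_tendsto_subseq (hXcl : IsClosed X) (hX : Convex ℝ X)
    (hA : ContinuousOn A X) (hτ : 0 < τ) (hBA : ∀ k, ∀ u ∈ X, ‖B k u - A u‖ ≤ δ k)
    (hδ : Tendsto δ atTop (𝓝 0)) (hxX : ∀ k, x k ∈ X)
    (hz : ∀ k, IsNearestPoint X (x k - τ • B k (x k)) (z (k + 1)))
    (hres : Tendsto (fun k => x k - z (k + 1)) atTop (𝓝 0)) {y : E} {φ : ℕ → ℕ}
    (hφ : Tendsto φ atTop atTop) (hy : Tendsto (x ∘ φ) atTop (𝓝 y)) : IsVISolution X A y := by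
  have hyX : y ∈ X := hXcl.mem_of_tendsto hy (Eventually.of_forall fun j => hxX (φ j))
  have hzφ : Tendsto (fun j => z (φ j + 1)) atTop (𝓝 y) := by
    simpa using hy.sub (hres.comp hφ)
  have hBφ : Tendsto (fun j => B (φ j) (x (φ j))) atTop (𝓝 (A y)) := by
    have hAφ : Tendsto (fun j => A (x (φ j))) atTop (𝓝 (A y)) :=
      (hA y hyX).tendsto.comp (tendsto_nhdsWithin_iff.2 ⟨hy, Eventually.of_forall fun j => hxX _⟩)
    have hBAφ : Tendsto (fun j => B (φ j) (x (φ j)) - A (x (φ j))) atTop (𝓝 0) :=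
      squeeze_zero_norm (fun j => hBA _ _ (hxX _)) (hδ.comp hφ)
    simpa using hBAφ.add hAφ
  refine ⟨hyX, fun w hw => ?_⟩
  have hlim := le_of_tendsto_of_tendsto' (((hres.comp hφ).inner (tendsto_const_nhds.sub hzφ)))
    ((hBφ.inner (tendsto_const_nhds.sub hzφ)).const_mul τ)
    fun j => (hz (φ j)).real_inner_le_smul_inner hX hw
  rw [inner_zero_left] at hlim
  exact (mul_nonneg_iff_of_pos_left hτ).1 hlim

theorem exists_tendsto_isVISolution_of_extragradient [ProperSpace E] (hXcl : IsClosed X)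
    (hX : Convex ℝ X) (hA : ContinuousOn A X) (hmono : ∀ u ∈ X, ∀ v ∈ X, 0 ≤ ⟪A u - A v, u - v⟫)
    (hsol : ∃ y, IsVISolution X A y)
    (hLip : ∀ k, ∀ u ∈ X, ∀ v ∈ X, ‖B k u - B k v‖ ≤ L * ‖u - v‖)
    (hBA : ∀ k, ∀ u ∈ X, ‖B k u - A u‖ ≤ δ k) (hδ : Summable δ) (hτ : 0 < τ)
    (hτL : τ ^ 2 * L ^ 2 < 1) (hx0 : x 0 ∈ X)
    (hz : ∀ k, IsNearestPoint X (x k - τ • B k (x k)) (z (k + 1)))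
    (hx : ∀ k, IsNearestPoint X (x k - τ • B k (z (k + 1))) (x (k + 1))) :
    ∃ y, IsVISolution X A y ∧ Tendsto x atTop (𝓝 y) := by
  have hxX : ∀ k, x k ∈ X := fun k => k.casesOn hx0 fun k => (hx k).1
  have hδ0 : ∀ k, 0 ≤ δ k := fun k => (norm_nonneg _).trans (hBA k _ hx0)
  have hc : 0 < 1 - τ ^ 2 * L ^ 2 := by linarith
  have hδsq : Summable fun k => δ k ^ 2 :=
    (hδ.mul_left (∑' j, δ j)).of_nonneg_of_le (fun k => sq_nonneg _) fun k => by
      rw [sq]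
      exact mul_le_mul_of_nonneg_right (hδ.le_tsum k fun j _ => hδ0 j) (hδ0 k)
  have hfejer := fun xs (hxs : IsVISolution X A xs) =>
    quasiFejer_tendsto (a := fun k => ‖x k - xs‖ ^ 2)
      (r := fun k => (1 - τ ^ 2 * L ^ 2) / 2 * ‖x k - z (k + 1)‖ ^ 2)
      (fun k => sq_nonneg _) (fun k => by positivity)
      (fun k => add_nonneg (mul_nonneg hτ.le (hδ0 k)) (div_nonneg (by positivity) hc.le))
      ((hδ.mul_left τ).add ((hδsq.mul_left (2 * τ ^ 2)).div_const _))
      (extragradient_quasiFejer hX hτ.le hc hmono hLip hBA hxX hz hx hxs)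
  obtain ⟨xs, hxs⟩ := hsol
  have hres : Tendsto (fun k => x k - z (k + 1)) atTop (𝓝 0) := by
    have hsq : Tendsto (fun k => ‖x k - z (k + 1)‖ ^ 2) atTop (𝓝 0) := by
      have := (hfejer xs hxs).2.const_mul (2 / (1 - τ ^ 2 * L ^ 2))
      rw [mul_zero] at this
      refine this.congr fun k => ?_
      field_simp
    simpa [Real.sqrt_sq (norm_nonneg _), ← tendsto_zero_iff_norm_tendsto_zero] using hsq.sqrt
  have hdist : ∀ s ∈ {y | IsVISolution X A y}, ∃ l, Tendsto (fun k => dist (x k) s) atTop (𝓝 l) :=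
    fun s hs => by
      obtain ⟨l, hl⟩ := (hfejer s hs).1
      exact ⟨√l, by simpa [dist_eq_norm, Real.sqrt_sq (norm_nonneg _)] using hl.sqrt⟩
  obtain ⟨y, hy, hxy⟩ := exists_tendsto_of_tendsto_dist ⟨xs, hxs⟩ hdist
    fun y φ hφ hy => isVISolution_of_tendsto_subseq hXcl hX hA hτ hBA hδ.tendsto_atTop_zero hxX hz
      hres hφ hy
  exact ⟨y, hy, hxy⟩

end Extragradient

theorem stmt_13_general
    {n m : ℕ}
    (X : Set (EuclideanSpace ℝ (Fin n))) (Θ : Set (EuclideanSpace ℝ (Fin m)))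
    (hXcl : IsClosed X) (hXcv : Convex ℝ X)
    (hΘcv : Convex ℝ Θ)
    (F : EuclideanSpace ℝ (Fin n) → EuclideanSpace ℝ (Fin m) → EuclideanSpace ℝ (Fin n))
    (g : EuclideanSpace ℝ (Fin m) → ℝ)
    (gradg : EuclideanSpace ℝ (Fin m) → EuclideanSpace ℝ (Fin m))
    -- g is continuously differentiable and strongly convex with minimizer θ*
    (hgdiff : ∀ ϑ, HasGradientAt g (gradg ϑ) ϑ)
    (ηg Gg : ℝ) (hηg : 0 < ηg) (hGg : 0 < Gg)
    (hstrg : StrongConvexOn Θ ηg g)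
    (hLipg : ∀ θ1 θ2, ‖gradg θ1 - gradg θ2‖ ≤ Gg * ‖θ1 - θ2‖)
    (θs : EuclideanSpace ℝ (Fin m)) (hθsΘ : θs ∈ Θ) (hθsmin : ∀ ϑ ∈ Θ, g θs ≤ g ϑ)
    -- monotonicity and Lipschitz continuity of F
    (hmono : ∀ x1 ∈ X, ∀ x2 ∈ X, 0 ≤ ⟪F x1 θs - F x2 θs, x1 - x2⟫)
    (LFx LFθ : ℝ) (hLFx : 0 < LFx) (hLFθ : 0 < LFθ)
    (hLipFx : ∀ θ' ∈ Θ, ∀ x1 ∈ X, ∀ x2 ∈ X, ‖F x1 θ' - F x2 θ'‖ ≤ LFx * ‖x1 - x2‖)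
    (hLipFθ : ∀ y ∈ X, ∀ θ1 ∈ Θ, ∀ θ2 ∈ Θ, ‖F y θ1 - F y θ2‖ ≤ LFθ * ‖θ1 - θ2‖)
    -- the solution set of VI(X, F(·,θ*)) is nonempty
    (hXstar : ∃ y ∈ X, ∀ w ∈ X, 0 ≤ ⟪F y θs, w - y⟫)
    -- Euclidean projections onto X and Θ
    (PX : EuclideanSpace ℝ (Fin n) → EuclideanSpace ℝ (Fin n))
    (PΘ : EuclideanSpace ℝ (Fin m) → EuclideanSpace ℝ (Fin m))
    (hPX : ∀ y, PX y ∈ X ∧ ∀ z ∈ X, ‖y - PX y‖ ≤ ‖y - z‖)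
    (hPΘ : ∀ y, PΘ y ∈ Θ ∧ ∀ z ∈ Θ, ‖y - PΘ y‖ ≤ ‖y - z‖)
    -- the joint extragradient scheme
    (x z : ℕ → EuclideanSpace ℝ (Fin n)) (θ : ℕ → EuclideanSpace ℝ (Fin m))
    (hx0 : x 0 ∈ X) (hθ0 : θ 0 ∈ Θ)
    -- steplengths
    (τ γg : ℝ) (hτ0 : 0 < τ)
    (hτ : τ ^ 2 < 1 / (LFx ^ 2 + 2 * LFθ * ‖θ 0 - θs‖))
    (hγg0 : 0 < γg) (hγg2 : γg < 2 / Gg)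
    (hzit : ∀ k, z (k + 1) = PX (x k - τ • F (x k) (θ k)))
    (hxit : ∀ k, x (k + 1) = PX (x k - τ • F (z (k + 1)) (θ k)))
    (hθit : ∀ k, θ (k + 1) = PΘ (θ k - γg • gradg (θ k))) :
    (∃ xl ∈ X, (∀ w ∈ X, 0 ≤ ⟪F xl θs, w - xl⟫) ∧ Tendsto x atTop (𝓝 xl)) ∧
      Tendsto θ atTop (𝓝 θs) := by
  
  have hθΘ : ∀ k, θ k ∈ Θ := fun k => k.casesOn hθ0 fun k => hθit k ▸ (hPΘ _).1
  obtain ⟨C, q, hq0, hq1, hrate⟩ := projGrad_linear_rate hΘcv hgdiff hLipg hGg hηg hstrg hθsΘ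
    hθsmin hγg0 hγg2 hθ0 fun k => hθit k ▸ hPΘ _
  have hθsum : Summable fun k => ‖θ k - θs‖ := (summable_nat_add_iff 1).1 <|
    ((summable_geometric_of_lt_one hq0 hq1).mul_left C).of_nonneg_of_le (fun _ => norm_nonneg _)
      hrate
  have hτL : τ ^ 2 * LFx ^ 2 < 1 := by
    rw [lt_div_iff₀ (by positivity)] at hτ
    linarith [mul_nonneg (mul_nonneg (sq_nonneg τ) hLFθ.le) (norm_nonneg (θ 0 - θs))]
  have hAcont : ContinuousOn (fun y => F y θs) X :=
    (LipschitzOnWith.of_dist_le' fun u hu v hv => by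
      simpa only [dist_eq_norm] using hLipFx θs hθsΘ u hu v hv).continuousOn
  obtain ⟨xl, hxl, hxlim⟩ := exists_tendsto_isVISolution_of_extragradient
    (B := fun k y => F y (θ k)) (δ := fun k => LFθ * ‖θ k - θs‖) hXcl hXcv hAcont hmono hXstar
    (fun k => hLipFx _ (hθΘ k)) (fun k u hu => hLipFθ u hu _ (hθΘ k) _ hθsΘ)
    (hθsum.mul_left LFθ) hτ0 hτL hx0 (fun k => hzit k ▸ hPX _) fun k => hxit k ▸ hPX _
  exact ⟨⟨xl, hxl.1, hxl.2, hxlim⟩,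
    tendsto_iff_norm_sub_tendsto_zero.2 hθsum.tendsto_atTop_zero⟩

/-- Convergence of the joint extragradient scheme for a misspecified monotone
variational inequality: with `τ² < 1/(L_{F,x}² + 2L_{F,θ}‖θ₀ − θ*‖)`, `x_k` converges to
a solution of `VI(X, F(·,θ*))` and `θ_k → θ*`. -/
theorem stmt_13
    {n m : ℕ}
    (X : Set (EuclideanSpace ℝ (Fin n))) (Θ : Set (EuclideanSpace ℝ (Fin m)))
    (hXne : X.Nonempty) (hXcl : IsClosed X) (hXcv : Convex ℝ X)
    (hΘne : Θ.Nonempty) (hΘcl : IsClosed Θ) (hΘcv : Convex ℝ Θ)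
    (hΘbdd : Bornology.IsBounded Θ)
    (F : EuclideanSpace ℝ (Fin n) → EuclideanSpace ℝ (Fin m) → EuclideanSpace ℝ (Fin n))
    (hFcont : Continuous fun p : EuclideanSpace ℝ (Fin n) × EuclideanSpace ℝ (Fin m) =>
      F p.1 p.2)
    (g : EuclideanSpace ℝ (Fin m) → ℝ)
    (gradg : EuclideanSpace ℝ (Fin m) → EuclideanSpace ℝ (Fin m))
    -- g is continuously differentiable and strongly convex with minimizer θ*
    (hgdiff : ∀ ϑ, HasGradientAt g (gradg ϑ) ϑ)
    (hggradcont : Continuous gradg)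
    (ηg Gg : ℝ) (hηg : 0 < ηg) (hGg : 0 < Gg)
    (hstrg : StrongConvexOn Θ ηg g)
    (hLipg : ∀ θ1 θ2, ‖gradg θ1 - gradg θ2‖ ≤ Gg * ‖θ1 - θ2‖)
    (θs : EuclideanSpace ℝ (Fin m)) (hθsΘ : θs ∈ Θ) (hθsmin : ∀ ϑ ∈ Θ, g θs ≤ g ϑ)
    -- monotonicity and Lipschitz continuity of F
    (hmono : ∀ x1 ∈ X, ∀ x2 ∈ X, 0 ≤ ⟪F x1 θs - F x2 θs, x1 - x2⟫)
    (LFx LFθ : ℝ) (hLFx : 0 < LFx) (hLFθ : 0 < LFθ)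
    (hLipFx : ∀ θ' ∈ Θ, ∀ x1 ∈ X, ∀ x2 ∈ X, ‖F x1 θ' - F x2 θ'‖ ≤ LFx * ‖x1 - x2‖)
    (hLipFθ : ∀ y ∈ X, ∀ θ1 ∈ Θ, ∀ θ2 ∈ Θ, ‖F y θ1 - F y θ2‖ ≤ LFθ * ‖θ1 - θ2‖)
    -- the solution set of VI(X, F(·,θ*)) is nonempty
    (hXstar : ∃ y ∈ X, ∀ w ∈ X, 0 ≤ ⟪F y θs, w - y⟫)
    -- Euclidean projections onto X and Θ
    (PX : EuclideanSpace ℝ (Fin n) → EuclideanSpace ℝ (Fin n))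
    (PΘ : EuclideanSpace ℝ (Fin m) → EuclideanSpace ℝ (Fin m))
    (hPX : ∀ y, PX y ∈ X ∧ ∀ z ∈ X, ‖y - PX y‖ ≤ ‖y - z‖)
    (hPΘ : ∀ y, PΘ y ∈ Θ ∧ ∀ z ∈ Θ, ‖y - PΘ y‖ ≤ ‖y - z‖)
    -- the joint extragradient scheme
    (x z : ℕ → EuclideanSpace ℝ (Fin n)) (θ : ℕ → EuclideanSpace ℝ (Fin m))
    (hx0 : x 0 ∈ X) (hθ0 : θ 0 ∈ Θ)
    -- steplengths
    (τ γg : ℝ) (hτ0 : 0 < τ)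
    (hτ : τ ^ 2 < 1 / (LFx ^ 2 + 2 * LFθ * ‖θ 0 - θs‖))
    (hγg0 : 0 < γg) (hγg2 : γg < 2 / Gg)
    (hzit : ∀ k, z (k + 1) = PX (x k - τ • F (x k) (θ k)))
    (hxit : ∀ k, x (k + 1) = PX (x k - τ • F (z (k + 1)) (θ k)))
    (hθit : ∀ k, θ (k + 1) = PΘ (θ k - γg • gradg (θ k))) :
    (∃ xl ∈ X, (∀ w ∈ X, 0 ≤ ⟪F xl θs, w - xl⟫) ∧ Tendsto x atTop (𝓝 xl)) ∧
      Tendsto θ atTop (𝓝 θs) :=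
  stmt_13_general X Θ hXcl hXcv hΘcv F g gradg hgdiff ηg Gg hηg hGg hstrg hLipg θs hθsΘ hθsmin hmono
    LFx LFθ hLFx hLFθ hLipFx hLipFθ hXstar PX PΘ hPX hPΘ x z θ hx0 hθ0 τ γg hτ0 hτ hγg0 hγg2 hzit
    hxit hθit
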